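/- Let I ⊆ ℝ be an open interval and let T = (T₁,T₂,T₃) : ℝ × I → ℝ³ be a C^∞ map with T₁² + T₂² + T₃² ≡ 1 and T₃(s,t) > −1 everywhere, satisfying the Schrödinger map equation ∂ₜT = T × ∂ₛ²T (usual cross product on ℝ³). Define the stereographic projection z : ℝ × I → ℂ by z := (T₁ + i T₂)/(1 + T₃). Then z satisfies ∂ₜz = i ∂ₛ²z − 2i z̄ (∂ₛz)² / (1 + |z|²) on ℝ × I. -/

import Mathlib

open MeasureTheory Set Filter Topology

noncomputable section

/-- Standard cross product on ℝ³. -/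
def cross (a b : Fin 3 → ℝ) : Fin 3 → ℝ :=
  ![a 1 * b 2 - a 2 * b 1, a 2 * b 0 - a 0 * b 2, a 0 * b 1 - a 1 * b 0]

/-- Stereographic projection `z = (T₁ + i T₂)/(1 + T₃)` from `(0,0,-1)`. -/
def stereo (T : ℝ → ℝ → Fin 3 → ℝ) (s t : ℝ) : ℂ :=
  (Complex.ofReal (T s t 0) + Complex.I * Complex.ofReal (T s t 1)) / (1 + Complex.ofReal (T s t 2))

set_option maxRecDepth 8000 in
set_option maxHeartbeats 1000000 in
private lemma stmt14_key (A0 A1 A2 U0 U1 U2 W0 W1 W2 : ℂ)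
    (e1 : A0 ^ 2 + A1 ^ 2 + A2 ^ 2 = 1)
    (e2 : A0 * U0 + A1 * U1 + A2 * U2 = 0)
    (e3 : U0 ^ 2 + U1 ^ 2 + U2 ^ 2 + (A0 * W0 + A1 * W1 + A2 * W2) = 0)
    (hd : (1 : ℂ) + A2 ≠ 0) (hI : Complex.I ^ 2 = -1) :
    ((A1 * W2 - A2 * W1 + Complex.I * (A2 * W0 - A0 * W2)) * (1 + A2) -
        (A0 + Complex.I * A1) * (A0 * W1 - A1 * W0)) / (1 + A2) ^ 2 =
      Complex.I *
          ((((W0 + Complex.I * W1) * (1 + A2) - (A0 + Complex.I * A1) * W2) * (1 + A2) ^ 2 -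
              ((U0 + Complex.I * U1) * (1 + A2) - (A0 + Complex.I * A1) * U2) * (2 * (1 + A2) * U2)) /
            ((1 + A2) ^ 2) ^ 2) -
        2 * Complex.I * ((A0 - Complex.I * A1) / (1 + A2)) *
            (((U0 + Complex.I * U1) * (1 + A2) - (A0 + Complex.I * A1) * U2) / (1 + A2) ^ 2) ^ 2 /
          (2 / (1 + A2)) := by
  field_simp
  apply mul_left_cancel₀ (mul_ne_zero two_ne_zero (pow_ne_zero 7 hd) : (2:ℂ) * (1 + A2) ^ 7 ≠ 0)
  linear_combination
    (2 * (1 + A2) ^ 7 * ((Complex.I * W0 - W1) * (1 + A2) ^ 2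
        + 2 * (U1 - Complex.I * U0) * U2 * (1 + A2) + (Complex.I * A0 - A1) * U2 ^ 2)) * e1
      + (2 * (1 + A2) ^ 7 * (2 * (Complex.I * U0 - U1) * (1 + A2) ^ 2)) * e2
      + (2 * (1 + A2) ^ 7 * ((A1 - Complex.I * A0) * (1 + A2) ^ 2)) * e3
      + (-2*W1 + 4*U1*U2 + -20*A2*W1 + 36*A2*U1*U2 + -90*A2 ^ 2*W1 + 144*A2 ^ 2*U1*U2 + -240*A2 ^ 3*W1 + 336*A2 ^ 3*U1*U2 + -420*A2 ^ 4*W1 + 504*A2 ^ 4*U1*U2 + -504*A2 ^ 5*W1 + 504*A2 ^ 5*U1*U2 + -420*A2 ^ 6*W1 + 336*A2 ^ 6*U1*U2 + -240*A2 ^ 7*W1 + 144*A2 ^ 7*U1*U2 + -90*A2 ^ 8*W1 + 36*A2 ^ 8*U1*U2 + -20*A2 ^ 9*W1 + 4*A2 ^ 9*U1*U2 + -2*A2 ^ 10*W1 + 2*A1*W2 + -4*A1*U2 ^ 2 + 2*A1*U1 ^ 2 + -2*A1*U1 ^ 2*Complex.I^2 + -4*A1*U0*U1*Complex.I + -2*A1*U0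 ^ 2 + 18*A1*A2*W2 + -32*A1*A2*U2 ^ 2 + 18*A1*A2*U1 ^ 2 + -18*A1*A2*U1 ^ 2*Complex.I^2 + -36*A1*A2*U0*U1*Complex.I + -18*A1*A2*U0 ^ 2 + 72*A1*A2 ^ 2*W2 + -112*A1*A2 ^ 2*U2 ^ 2 + 72*A1*A2 ^ 2*U1 ^ 2 + -72*A1*A2 ^ 2*U1 ^ 2*Complex.I^2 + -144*A1*A2 ^ 2*U0*U1*Complex.I + -72*A1*A2 ^ 2*U0 ^ 2 + 168*A1*A2 ^ 3*W2 + -224*A1*A2 ^ 3*U2 ^ 2 + 168*A1*A2 ^ 3*U1 ^ 2 + -168*A1*A2 ^ 3*U1 ^ 2*Complex.I^2 + -336*A1*A2 ^ 3*U0*U1*Complex.I + -168*A1*A2 ^ 3*U0 ^ 2 + 252*A1*A2 ^ 4*W2 + -280*A1*A2 ^ 4*U2 ^ 2 + 252*A1*A2 ^ 4*U1 ^ 2 + -252*A1*A2 ^ 4*U1 ^ 2*Complex.I^2 + -504*A1*A2 ^ 4*U0*U1*Complex.I + -252*A1*A2 ^ 4*U0 ^ 2 + 252*A1*A2 ^ 5*W2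 + -224*A1*A2 ^ 5*U2 ^ 2 + 252*A1*A2 ^ 5*U1 ^ 2 + -252*A1*A2 ^ 5*U1 ^ 2*Complex.I^2 + -504*A1*A2 ^ 5*U0*U1*Complex.I + -252*A1*A2 ^ 5*U0 ^ 2 + 168*A1*A2 ^ 6*W2 + -112*A1*A2 ^ 6*U2 ^ 2 + 168*A1*A2 ^ 6*U1 ^ 2 + -168*A1*A2 ^ 6*U1 ^ 2*Complex.I^2 + -336*A1*A2 ^ 6*U0*U1*Complex.I + -168*A1*A2 ^ 6*U0 ^ 2 + 72*A1*A2 ^ 7*W2 + -32*A1*A2 ^ 7*U2 ^ 2 + 72*A1*A2 ^ 7*U1 ^ 2 + -72*A1*A2 ^ 7*U1 ^ 2*Complex.I^2 + -144*A1*A2 ^ 7*U0*U1*Complex.I + -72*A1*A2 ^ 7*U0 ^ 2 + 18*A1*A2 ^ 8*W2 + -4*A1*A2 ^ 8*U2 ^ 2 + 18*A1*A2 ^ 8*U1 ^ 2 + -18*A1*A2 ^ 8*U1 ^ 2*Complex.I^2 + -36*A1*A2 ^ 8*U0*U1*Complex.I + -18*A1*A2 ^ 8*U0 ^ 2 + 2*A1*A2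 ^ 9*W2 + 2*A1*A2 ^ 9*U1 ^ 2 + -2*A1*A2 ^ 9*U1 ^ 2*Complex.I^2 + -4*A1*A2 ^ 9*U0*U1*Complex.I + -2*A1*A2 ^ 9*U0 ^ 2 + -4*A1 ^ 2*U1*U2 + 4*A1 ^ 2*U1*U2*Complex.I^2 + 4*A1 ^ 2*U0*U2*Complex.I + -32*A1 ^ 2*A2*U1*U2 + 32*A1 ^ 2*A2*U1*U2*Complex.I^2 + 32*A1 ^ 2*A2*U0*U2*Complex.I + -112*A1 ^ 2*A2 ^ 2*U1*U2 + 112*A1 ^ 2*A2 ^ 2*U1*U2*Complex.I^2 + 112*A1 ^ 2*A2 ^ 2*U0*U2*Complex.I + -224*A1 ^ 2*A2 ^ 3*U1*U2 + 224*A1 ^ 2*A2 ^ 3*U1*U2*Complex.I^2 + 224*A1 ^ 2*A2 ^ 3*U0*U2*Complex.I + -280*A1 ^ 2*A2 ^ 4*U1*U2 + 280*A1 ^ 2*A2 ^ 4*U1*U2*Complex.I^2 + 280*A1 ^ 2*A2 ^ 4*U0*U2*Complex.I + -224*A1 ^ 2*A2 ^ 5*U1*U2 + 224*A1 ^ 2*A2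 ^ 5*U1*U2*Complex.I^2 + 224*A1 ^ 2*A2 ^ 5*U0*U2*Complex.I + -112*A1 ^ 2*A2 ^ 6*U1*U2 + 112*A1 ^ 2*A2 ^ 6*U1*U2*Complex.I^2 + 112*A1 ^ 2*A2 ^ 6*U0*U2*Complex.I + -32*A1 ^ 2*A2 ^ 7*U1*U2 + 32*A1 ^ 2*A2 ^ 7*U1*U2*Complex.I^2 + 32*A1 ^ 2*A2 ^ 7*U0*U2*Complex.I + -4*A1 ^ 2*A2 ^ 8*U1*U2 + 4*A1 ^ 2*A2 ^ 8*U1*U2*Complex.I^2 + 4*A1 ^ 2*A2 ^ 8*U0*U2*Complex.I + 2*A1 ^ 3*U2 ^ 2 + -2*A1 ^ 3*U2 ^ 2*Complex.I^2 + 14*A1 ^ 3*A2*U2 ^ 2 + -14*A1 ^ 3*A2*U2 ^ 2*Complex.I^2 + 42*A1 ^ 3*A2 ^ 2*U2 ^ 2 + -42*A1 ^ 3*A2 ^ 2*U2 ^ 2*Complex.I^2 + 70*A1 ^ 3*A2 ^ 3*U2 ^ 2 + -70*A1 ^ 3*A2 ^ 3*U2 ^ 2*Complex.I^2 + 70*A1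 ^ 3*A2 ^ 4*U2 ^ 2 + -70*A1 ^ 3*A2 ^ 4*U2 ^ 2*Complex.I^2 + 42*A1 ^ 3*A2 ^ 5*U2 ^ 2 + -42*A1 ^ 3*A2 ^ 5*U2 ^ 2*Complex.I^2 + 14*A1 ^ 3*A2 ^ 6*U2 ^ 2 + -14*A1 ^ 3*A2 ^ 6*U2 ^ 2*Complex.I^2 + 2*A1 ^ 3*A2 ^ 7*U2 ^ 2 + -2*A1 ^ 3*A2 ^ 7*U2 ^ 2*Complex.I^2 + 2*A0*U1 ^ 2*Complex.I + 4*A0*U0*U1 + 18*A0*A2*U1 ^ 2*Complex.I + 36*A0*A2*U0*U1 + 72*A0*A2 ^ 2*U1 ^ 2*Complex.I + 144*A0*A2 ^ 2*U0*U1 + 168*A0*A2 ^ 3*U1 ^ 2*Complex.I + 336*A0*A2 ^ 3*U0*U1 + 252*A0*A2 ^ 4*U1 ^ 2*Complex.I + 504*A0*A2 ^ 4*U0*U1 + 252*A0*A2 ^ 5*U1 ^ 2*Complex.I + 504*A0*A2 ^ 5*U0*U1 + 168*A0*A2 ^ 6*U1 ^ 2*Complex.I + 336*A0*A2 ^ 6*U0*U1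 + 72*A0*A2 ^ 7*U1 ^ 2*Complex.I + 144*A0*A2 ^ 7*U0*U1 + 18*A0*A2 ^ 8*U1 ^ 2*Complex.I + 36*A0*A2 ^ 8*U0*U1 + 2*A0*A2 ^ 9*U1 ^ 2*Complex.I + 4*A0*A2 ^ 9*U0*U1 + -2*A0*A1 ^ 2*U2 ^ 2*Complex.I + -14*A0*A1 ^ 2*A2*U2 ^ 2*Complex.I + -42*A0*A1 ^ 2*A2 ^ 2*U2 ^ 2*Complex.I + -70*A0*A1 ^ 2*A2 ^ 3*U2 ^ 2*Complex.I + -70*A0*A1 ^ 2*A2 ^ 4*U2 ^ 2*Complex.I + -42*A0*A1 ^ 2*A2 ^ 5*U2 ^ 2*Complex.I + -14*A0*A1 ^ 2*A2 ^ 6*U2 ^ 2*Complex.I + -2*A0*A1 ^ 2*A2 ^ 7*U2 ^ 2*Complex.I + -4*A0 ^ 2*U1*U2 + -32*A0 ^ 2*A2*U1*U2 + -112*A0 ^ 2*A2 ^ 2*U1*U2 + -224*A0 ^ 2*A2 ^ 3*U1*U2 + -280*A0 ^ 2*A2 ^ 4*U1*U2 + -224*A0 ^ 2*A2 ^ 5*U1*U2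 + -112*A0 ^ 2*A2 ^ 6*U1*U2 + -32*A0 ^ 2*A2 ^ 7*U1*U2 + -4*A0 ^ 2*A2 ^ 8*U1*U2 + 2*A0 ^ 2*A1*U2 ^ 2 + 14*A0 ^ 2*A1*A2*U2 ^ 2 + 42*A0 ^ 2*A1*A2 ^ 2*U2 ^ 2 + 70*A0 ^ 2*A1*A2 ^ 3*U2 ^ 2 + 70*A0 ^ 2*A1*A2 ^ 4*U2 ^ 2 + 42*A0 ^ 2*A1*A2 ^ 5*U2 ^ 2 + 14*A0 ^ 2*A1*A2 ^ 6*U2 ^ 2 + 2*A0 ^ 2*A1*A2 ^ 7*U2 ^ 2) * hI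



theorem stmt14 (I : Set ℝ) (hIopen : IsOpen I) (hIinterval : I.OrdConnected)
    (T : ℝ → ℝ → Fin 3 → ℝ)
    (hT : ContDiffOn ℝ (⊤ : ℕ∞) (fun p : ℝ × ℝ => T p.1 p.2) (Set.univ ×ˢ I))
    (hsphere : ∀ s : ℝ, ∀ t ∈ I, (T s t 0) ^ 2 + (T s t 1) ^ 2 + (T s t 2) ^ 2 = 1)
    (hT3 : ∀ s : ℝ, ∀ t ∈ I, -1 < T s t 2)
    (hpde : ∀ s : ℝ, ∀ t ∈ I,
      deriv (fun τ => T s τ) t = cross (T s t) (deriv (deriv (fun σ => T σ t)) s)) :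
    ∀ s : ℝ, ∀ t ∈ I,
      deriv (fun τ => stereo T s τ) t =
        Complex.I * deriv (deriv (fun σ => stereo T σ t)) s
          - 2 * Complex.I * (starRingEnd ℂ) (stereo T s t)
              * (deriv (fun σ => stereo T σ t) s) ^ 2
              / (1 + Complex.ofReal (‖stereo T s t‖ ^ 2)) := by
  intro s t ht
  -- smoothness of the s-slice, componentwise
  have hT2 : ContDiffOn ℝ 2 (fun p : ℝ × ℝ => T p.1 p.2) (Set.univ ×ˢ I) := hT.of_le (WithTop.coe_le_coe.2 (le_top : (2:ℕ∞) ≤ ⊤))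
  have hfC : ∀ i, ContDiff ℝ 2 (fun σ => T σ t i) := by
    intro i
    have h1 : ContDiffOn ℝ 2 (fun σ : ℝ => T σ t) Set.univ := by
      have := hT2.comp (s := (Set.univ : Set ℝ)) (f := fun σ : ℝ => (σ, t))
        (contDiff_id.prodMk contDiff_const).contDiffOn (fun σ _ => by simp [ht])
      exact this
    have h2 : ContDiff ℝ 2 (fun σ : ℝ => T σ t) := contDiffOn_univ.1 h1
    exact contDiff_pi.1 h2 i
  have hfd : ∀ i σ, HasDerivAt (fun σ' => T σ' t i) (deriv (fun σ' => T σ' t i) σ) σ :=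
    fun i σ => (((hfC i).differentiable two_ne_zero) σ).hasDerivAt
  have hUC : ∀ i, ContDiff ℝ 1 (deriv (fun σ => T σ t i)) := by
    intro i
    have := (contDiff_succ_iff_deriv (n := 1)).1 (hfC i)
    exact this.2.2
  have hUd : ∀ i σ, HasDerivAt (deriv (fun σ' => T σ' t i))
      (deriv (deriv (fun σ' => T σ' t i)) σ) σ :=
    fun i σ => (((hUC i).differentiable one_ne_zero) σ).hasDerivAt
  -- t-slice
  have hgd : ∀ i, HasDerivAt (fun τ => T s τ i) (deriv (fun τ => T s τ i) t) t := by
    intro i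
    have h1 : ContDiffOn ℝ 2 (fun τ : ℝ => T s τ) I := by
      have := hT2.comp (s := I) (f := fun τ : ℝ => (s, τ))
        (contDiff_const.prodMk contDiff_id).contDiffOn (fun τ hτ => by simp [hτ])
      exact this
    have h2 : DifferentiableAt ℝ (fun τ => T s τ) t :=
      (h1.contDiffAt (hIopen.mem_nhds ht)).differentiableAt two_ne_zero
    exact ((differentiableAt_pi.1 h2) i).hasDerivAt
  -- abbreviations
  set a0 := T s t 0 with ha0
  set a1 := T s t 1 with ha1
  set a2 := T s t 2 with ha2
  set u0 := deriv (fun σ' => T σ' t 0) s with hu0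
  set u1 := deriv (fun σ' => T σ' t 1) s with hu1
  set u2 := deriv (fun σ' => T σ' t 2) s with hu2
  set w0 := deriv (deriv (fun σ' => T σ' t 0)) s with hw0
  set w1 := deriv (deriv (fun σ' => T σ' t 1)) s with hw1
  set w2 := deriv (deriv (fun σ' => T σ' t 2)) s with hw2
  set v0 := deriv (fun τ => T s τ 0) t with hv0
  set v1 := deriv (fun τ => T s τ 1) t with hv1
  set v2 := deriv (fun τ => T s τ 2) t with hv2
  -- PDE componentwise
  have hvec : deriv (fun τ => T s τ) t = fun i => deriv (fun τ => T s τ i) t :=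
    (hasDerivAt_pi.2 fun i => hgd i).deriv
  have hDs : deriv (fun σ => T σ t) = fun σ i => deriv (fun σ' => T σ' t i) σ := by
    funext σ
    exact (hasDerivAt_pi.2 fun i => hfd i σ).deriv
  have hvecss : deriv (deriv (fun σ => T σ t)) s
      = fun i => deriv (deriv (fun σ' => T σ' t i)) s := by
    rw [hDs]
    exact (hasDerivAt_pi.2 fun i => hUd i s).deriv
  have hpde' := hpde s t ht
  rw [hvec, hvecss] at hpde'
  have hV0 : v0 = a1 * w2 - a2 * w1 := by
    have := congrFun hpde' 0; simpa [cross, hv0, hw1, hw2, ha1, ha2] using this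
  have hV1 : v1 = a2 * w0 - a0 * w2 := by
    have := congrFun hpde' 1; simpa [cross, hv1, hw0, hw2, ha0, ha2] using this
  have hV2 : v2 = a0 * w1 - a1 * w0 := by
    have := congrFun hpde' 2; simpa [cross, hv2, hw0, hw1, ha0, ha1] using this
  -- constraints from the sphere condition (in the s-variable)
  have hE2 : ∀ σ, T σ t 0 * deriv (fun σ' => T σ' t 0) σ + T σ t 1 * deriv (fun σ' => T σ' t 1) σ
      + T σ t 2 * deriv (fun σ' => T σ' t 2) σ = 0 := by
    intro σ
    have h1 : HasDerivAt (fun σ' => T σ' t 0 ^ 2 + T σ' t 1 ^ 2 + T σ' t 2 ^ 2)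
        (2 * (T σ t 0 * deriv (fun σ' => T σ' t 0) σ + T σ t 1 * deriv (fun σ' => T σ' t 1) σ
          + T σ t 2 * deriv (fun σ' => T σ' t 2) σ)) σ := by
      have := (((hfd 0 σ).pow 2).add ((hfd 1 σ).pow 2)).add ((hfd 2 σ).pow 2)
      exact this.congr_deriv (by ring)
    have h2 : (fun σ' => T σ' t 0 ^ 2 + T σ' t 1 ^ 2 + T σ' t 2 ^ 2) = fun _ => (1:ℝ) :=
      funext fun σ' => hsphere σ' t ht
    rw [h2] at h1
    have h3 := h1.unique (hasDerivAt_const σ 1)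
    linarith
  have e2 : a0 * u0 + a1 * u1 + a2 * u2 = 0 := hE2 s
  have e3 : u0 ^ 2 + u1 ^ 2 + u2 ^ 2 + (a0 * w0 + a1 * w1 + a2 * w2) = 0 := by
    have h1 : HasDerivAt (fun σ => T σ t 0 * deriv (fun σ' => T σ' t 0) σ
        + T σ t 1 * deriv (fun σ' => T σ' t 1) σ + T σ t 2 * deriv (fun σ' => T σ' t 2) σ)
        (u0 ^ 2 + u1 ^ 2 + u2 ^ 2 + (a0 * w0 + a1 * w1 + a2 * w2)) s := by
      have := (((hfd 0 s).mul (hUd 0 s)).add ((hfd 1 s).mul (hUd 1 s))).add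
        ((hfd 2 s).mul (hUd 2 s))
      exact this.congr_deriv (by ring)
    have h2 : (fun σ => T σ t 0 * deriv (fun σ' => T σ' t 0) σ
        + T σ t 1 * deriv (fun σ' => T σ' t 1) σ + T σ t 2 * deriv (fun σ' => T σ' t 2) σ)
        = fun _ => (0:ℝ) := funext fun σ => hE2 σ
    rw [h2] at h1
    exact h1.unique (hasDerivAt_const s 0)
  have e1 : a0 ^ 2 + a1 ^ 2 + a2 ^ 2 = 1 := hsphere s t ht
  -- nonvanishing denominators
  have hdpos : ∀ σ, (0:ℝ) < 1 + T σ t 2 := fun σ => by linarith [hT3 σ t ht]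
  have hdC : ∀ σ, (1 + (T σ t 2 : ℂ)) ≠ 0 := by
    intro σ
    rw [show (1 + (T σ t 2 : ℂ)) = ((1 + T σ t 2 : ℝ) : ℂ) by push_cast; ring]
    exact_mod_cast (hdpos σ).ne'
  have hd0 : (1 + (a2:ℂ)) ≠ 0 := hdC s
  -- z_t
  have hzt : HasDerivAt (fun τ => stereo T s τ)
      ((((v0:ℂ) + Complex.I * v1) * (1 + (a2:ℂ)) - ((a0:ℂ) + Complex.I * a1) * v2)
        / (1 + (a2:ℂ)) ^ 2) t := by
    have hnum : HasDerivAt (fun τ => ((T s τ 0 : ℂ)) + Complex.I * (T s τ 1 : ℂ))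
        ((v0:ℂ) + Complex.I * v1) t :=
      ((hgd 0).ofReal_comp).add (((hgd 1).ofReal_comp).const_mul Complex.I)
    have hden : HasDerivAt (fun τ => (1:ℂ) + (T s τ 2 : ℂ)) ((v2:ℂ)) t :=
      ((hgd 2).ofReal_comp).const_add 1
    exact hnum.div hden (hdC s)
  -- z_s as a function
  have hzs : ∀ σ, HasDerivAt (fun σ' => stereo T σ' t)
      (((((deriv (fun σ' => T σ' t 0) σ : ℝ) : ℂ) + Complex.I * ((deriv (fun σ' => T σ' t 1) σ : ℝ) : ℂ))
          * (1 + (T σ t 2 : ℂ))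
        - ((T σ t 0 : ℂ) + Complex.I * (T σ t 1 : ℂ)) * ((deriv (fun σ' => T σ' t 2) σ : ℝ) : ℂ))
        / (1 + (T σ t 2 : ℂ)) ^ 2) σ := by
    intro σ
    have hnum : HasDerivAt (fun σ' => ((T σ' t 0 : ℂ)) + Complex.I * (T σ' t 1 : ℂ))
        (((deriv (fun σ' => T σ' t 0) σ : ℝ) : ℂ) + Complex.I * ((deriv (fun σ' => T σ' t 1) σ : ℝ) : ℂ)) σ :=
      ((hfd 0 σ).ofReal_comp).add (((hfd 1 σ).ofReal_comp).const_mul Complex.I)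
    have hden : HasDerivAt (fun σ' => (1:ℂ) + (T σ' t 2 : ℂ))
        (((deriv (fun σ' => T σ' t 2) σ : ℝ) : ℂ)) σ := ((hfd 2 σ).ofReal_comp).const_add 1
    exact hnum.div hden (hdC σ)
  have hZs : deriv (fun σ => stereo T σ t) = fun σ =>
      (((((deriv (fun σ' => T σ' t 0) σ : ℝ) : ℂ) + Complex.I * ((deriv (fun σ' => T σ' t 1) σ : ℝ) : ℂ))
          * (1 + (T σ t 2 : ℂ))
        - ((T σ t 0 : ℂ) + Complex.I * (T σ t 1 : ℂ)) * ((deriv (fun σ' => T σ' t 2) σ : ℝ) : ℂ))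
        / (1 + (T σ t 2 : ℂ)) ^ 2) :=
    funext fun σ => (hzs σ).deriv
  -- z_ss
  have hzss : HasDerivAt (fun σ =>
      (((((deriv (fun σ' => T σ' t 0) σ : ℝ) : ℂ) + Complex.I * ((deriv (fun σ' => T σ' t 1) σ : ℝ) : ℂ))
          * (1 + (T σ t 2 : ℂ))
        - ((T σ t 0 : ℂ) + Complex.I * (T σ t 1 : ℂ)) * ((deriv (fun σ' => T σ' t 2) σ : ℝ) : ℂ))
        / (1 + (T σ t 2 : ℂ)) ^ 2))
      (((((w0:ℂ) + Complex.I * w1) * (1 + (a2:ℂ))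
          - ((a0:ℂ) + Complex.I * a1) * (w2:ℂ)) * ((1 + (a2:ℂ)) ^ 2)
        - (((u0:ℂ) + Complex.I * u1) * (1 + (a2:ℂ))
          - ((a0:ℂ) + Complex.I * a1) * (u2:ℂ)) * (2 * (1 + (a2:ℂ)) * (u2:ℂ)))
        / ((1 + (a2:ℂ)) ^ 2) ^ 2) s := by
    have hA : ∀ i, HasDerivAt (fun σ => ((T σ t i : ℝ) : ℂ))
        (((deriv (fun σ' => T σ' t i) s : ℝ) : ℂ)) s := fun i => (hfd i s).ofReal_comp
    have hU : ∀ i, HasDerivAt (fun σ => ((deriv (fun σ' => T σ' t i) σ : ℝ) : ℂ))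
        (((deriv (deriv (fun σ' => T σ' t i)) s : ℝ) : ℂ)) s := fun i => (hUd i s).ofReal_comp
    have hnum : HasDerivAt (fun σ =>
        ((((deriv (fun σ' => T σ' t 0) σ : ℝ) : ℂ) + Complex.I * ((deriv (fun σ' => T σ' t 1) σ : ℝ) : ℂ))
            * (1 + (T σ t 2 : ℂ))
          - ((T σ t 0 : ℂ) + Complex.I * (T σ t 1 : ℂ)) * ((deriv (fun σ' => T σ' t 2) σ : ℝ) : ℂ)))
        (((w0:ℂ) + Complex.I * w1) * (1 + (a2:ℂ)) - ((a0:ℂ) + Complex.I * a1) * (w2:ℂ)) s := by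
      have h1 : HasDerivAt (fun σ =>
          (((deriv (fun σ' => T σ' t 0) σ : ℝ) : ℂ) + Complex.I * ((deriv (fun σ' => T σ' t 1) σ : ℝ) : ℂ))
            * (1 + (T σ t 2 : ℂ)))
          (((w0:ℂ) + Complex.I * w1) * (1 + (a2:ℂ)) + (((u0:ℂ) + Complex.I * u1)) * (u2:ℂ)) s := by
        have := (((hU 0).add ((hU 1).const_mul Complex.I)).mul ((hA 2).const_add 1))
        exact this.congr_deriv (by simp only [Pi.add_apply]; ring)
      have h2 : HasDerivAt (fun σ =>
          ((T σ t 0 : ℂ) + Complex.I * (T σ t 1 : ℂ)) * ((deriv (fun σ' => T σ' t 2) σ : ℝ) : ℂ))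
          (((u0:ℂ) + Complex.I * u1) * (u2:ℂ) + ((a0:ℂ) + Complex.I * a1) * (w2:ℂ)) s := by
        have := ((hA 0).add ((hA 1).const_mul Complex.I)).mul (hU 2)
        exact this.congr_deriv (by simp only [Pi.add_apply]; ring)
      have := h1.sub h2
      exact this.congr_deriv (by ring)
    have hden : HasDerivAt (fun σ => (1 + (T σ t 2 : ℂ)) ^ 2)
        (2 * (1 + (a2:ℂ)) * (u2:ℂ)) s := by
      have h := ((hA 2).const_add 1).mul ((hA 2).const_add 1)
      have h2 : HasDerivAt (fun σ => (1 + (T σ t 2 : ℂ)) ^ 2)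
          ((u2:ℂ) * (1 + (a2:ℂ)) + (1 + (a2:ℂ)) * (u2:ℂ)) s := by
        rw [show (fun σ => (1 + (T σ t 2 : ℂ)) ^ 2) = (fun σ => (1 + (T σ t 2 : ℂ))) * (fun σ => (1 + (T σ t 2 : ℂ))) by funext σ; simp only [Pi.mul_apply, pow_two]]; exact h
      convert h2 using 1 <;> ring
    have hdenne : ((1 + (a2:ℂ)) ^ 2) ≠ 0 := pow_ne_zero 2 (hdC s)
    exact hnum.div hden hdenne
  -- norm identity
  have e1C : (a0:ℂ) ^ 2 + (a1:ℂ) ^ 2 + (a2:ℂ) ^ 2 = 1 := by exact_mod_cast congrArg Complex.ofReal e1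
  have e2C : (a0:ℂ) * u0 + (a1:ℂ) * u1 + (a2:ℂ) * u2 = 0 := by exact_mod_cast congrArg Complex.ofReal e2
  have e3C : (u0:ℂ) ^ 2 + (u1:ℂ) ^ 2 + (u2:ℂ) ^ 2 + ((a0:ℂ) * w0 + (a1:ℂ) * w1 + (a2:ℂ) * w2) = 0 := by
    exact_mod_cast congrArg Complex.ofReal e3
  have hnorm : ‖stereo T s t‖ ^ 2 = (a0 ^ 2 + a1 ^ 2) / (1 + a2) ^ 2 := by
    rw [show stereo T s t = ((a0:ℂ) + Complex.I * (a1:ℂ)) / (1 + (a2:ℂ)) from rfl]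
    rw [norm_div, div_pow]
    congr 1
    · rw [Complex.sq_norm, Complex.normSq_apply]
      simp
      ring
    · rw [show (1 + (a2:ℂ)) = ((1 + a2 : ℝ) : ℂ) by push_cast; ring, Complex.norm_real]
      rw [Real.norm_eq_abs, sq_abs]
  have hplus : (1:ℂ) + Complex.ofReal (‖stereo T s t‖ ^ 2) = 2 / (1 + (a2:ℂ)) := by
    rw [hnorm]
    push_cast
    field_simp [hd0]
    linear_combination e1C
  -- conjugate
  have hconj : (starRingEnd ℂ) (stereo T s t)
      = ((a0:ℂ) - Complex.I * a1) / (1 + (a2:ℂ)) := by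
    rw [show stereo T s t = ((a0:ℂ) + Complex.I * (a1:ℂ)) / (1 + (a2:ℂ)) from rfl]
    rw [map_div₀]
    simp only [map_add, map_mul, map_one, Complex.conj_ofReal, Complex.conj_I]
    ring
  -- rewrite everything
  rw [hzt.deriv, hZs, hzss.deriv, hplus, hconj]
  rw [hV0, hV1, hV2]
  push_cast
  simp only [← ha0, ← ha1, ← ha2, ← hu0, ← hu1, ← hu2]
  exact stmt14_key _ _ _ _ _ _ _ _ _ e1C e2C e3C hd0 Complex.I_sq
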